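/- For a nice birth-death chain started at state n and any constant k > 0, there exists a constant θ(k) such that the extinction time satisfies Pr[E(n) ≥ θ(k)·n] ≤ 1/n^k for all sufficiently large n. -/

import Mathlib

open MeasureTheory ProbabilityTheory
open scoped ENNReal

/-- Extinction time (first hitting time of the absorbing state `0`) of a process
`N`, valued in `ℝ≥0∞` (it is `∞` if the process never hits `0`). -/
noncomputable def extinctionTime {Ω : Type*} (N : ℕ → Ω → ℕ) (ω : Ω) : ℝ≥0∞ :=
  ⨅ (t : ℕ) (_ : N t ω = 0), (t : ℝ≥0∞)

/-- Total number of birth (increment) steps of the process `N`. Since `0` is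
absorbing and `p 0 = 0`, these are exactly the births before extinction. -/
noncomputable def birthCount {Ω : Type*} (N : ℕ → Ω → ℕ) (ω : Ω) : ℝ≥0∞ :=
  ∑' t : ℕ, if N (t + 1) ω = N t ω + 1 then 1 else 0

/-! The potential `φ m = g 1 + ⋯ + g m` has increments `g m = r ^ min m M * 2 ^ (m - M)`, with
`r ≤ D / (2 (1 - D))` and `M ≥ 8 C / D`. Below `M` a birth raises `φ` by `r` times what a death
lowers it by, and the death probability `≥ D` wins; beyond `M` births have probability `≤ D / 8`,
which beats the doubling of `g`. Hence `E[φ (N (t+1)) | past] ≤ (1 - ε) φ (N t)` for some `ε > 0`.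
Since `φ n ≤ 2 ^ (n + 1)`, after `t₀ n` steps with `(1 - ε) ^ t₀ < 1 / 2` the expectation of
`φ (N (t₀ n))` is exponentially small in `n`, and Markov's inequality (`φ ≥ φ 1 > 0` off `0`)
bounds the probability that the chain has not been absorbed by `n ^ (-k)` for large `n`. -/

theorem extinctionTime_le_of_eq_zero {Ω : Type*} {N : ℕ → Ω → ℕ} {ω : Ω} {t : ℕ}
    (h : N t ω = 0) : extinctionTime N ω ≤ t :=
  iInf₂_le t h

namespace BirthDeath

theorem lintegral_eq_sum_of_sum_measure_singleton_eq_one {α : Type*} [MeasurableSpace α]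
    [MeasurableSingletonClass α] {μ : Measure α} [IsProbabilityMeasure μ] {s : Finset α}
    (hs : ∑ x ∈ s, μ {x} = 1) (f : α → ℝ≥0∞) :
    ∫⁻ x, f x ∂μ = ∑ x ∈ s, f x * μ {x} := by
  rw [← lintegral_finset, Measure.restrict_eq_self_of_ae_mem]
  change (s : Set α) ∈ ae μ
  rw [mem_ae_iff_prob_eq_one s.measurableSet, ← hs, sum_measure_singleton]

theorem lintegral_eq_tsum_setLIntegral_preimage {Ω β : Type*} [MeasurableSpace Ω]
    [MeasurableSpace β] [Countable β] [MeasurableSingletonClass β] {μ : Measure Ω}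
    {X : Ω → β} (hX : Measurable X) (g : Ω → ℝ≥0∞) :
    ∫⁻ ω, g ω ∂μ = ∑' b, ∫⁻ ω in X ⁻¹' {b}, g ω ∂μ := by
  rw [← lintegral_iUnion (fun b => hX (measurableSet_singleton b))
    (pairwise_disjoint_fiber X), ← Set.preimage_iUnion, Set.iUnion_of_singleton,
    Set.preimage_univ, Measure.restrict_univ]

theorem setLIntegral_eq_measure_mul_lintegral_cond {Ω : Type*} [MeasurableSpace Ω]
    {μ : Measure Ω} {S : Set Ω} (hS : μ S ≠ ∞) (g : Ω → ℝ≥0∞) :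
    ∫⁻ ω in S, g ω ∂μ = μ S * ∫⁻ ω, g ω ∂μ[|S] := by
  rcases eq_or_ne (μ S) 0 with h0 | h0
  · rw [Measure.restrict_eq_zero.mpr h0, lintegral_zero_measure, h0, zero_mul]
  · rw [ProbabilityTheory.cond, lintegral_smul_measure, smul_eq_mul, ← mul_assoc,
      ENNReal.mul_inv_cancel h0 hS, one_mul]

theorem lintegral_comp_eq_of_birthDeathStep {Ω : Type*} [MeasurableSpace Ω] {ν : Measure Ω}
    [IsProbabilityMeasure ν] {X : Ω → ℕ} (hX : Measurable X) {m : ℕ} {p q : ℝ}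
    (hp : 0 ≤ p) (hq : 0 ≤ q) (hpq : p + q ≤ 1)
    (hbirth : ν {ω | X ω = m + 1} = ENNReal.ofReal p)
    (hdeath : 0 < m → ν {ω | X ω = m - 1} = ENNReal.ofReal q)
    (hhold : ν {ω | X ω = m} = ENNReal.ofReal (1 - p - q))
    -- at `m = 0` the death term `q * f (0 - 1) = q * f 0` must vanish
    (hq_zero : m = 0 → q = 0)
    (f : ℕ → ℝ≥0∞) :
    ∫⁻ ω, f (X ω) ∂ν = ENNReal.ofReal p * f (m + 1) + ENNReal.ofReal q * f (m - 1)
      + ENNReal.ofReal (1 - p - q) * f m := by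
  have := Measure.isProbabilityMeasure_map (μ := ν) hX.aemeasurable
  have hlaw : ∀ j, ν.map X {j} = ν {ω | X ω = j} := fun j =>
    Measure.map_apply hX (measurableSet_singleton j)
  rw [← lintegral_map (measurable_of_countable f) hX]
  rcases Nat.eq_zero_or_pos m with hm | hm
  · obtain rfl := hq_zero hm
    have hs : ∑ j ∈ {m + 1, m}, ν.map X {j} = 1 := by
      rw [Finset.sum_pair (by omega), hlaw, hlaw, hbirth, hhold,
        ← ENNReal.ofReal_add hp (by linarith)]
      simp
    rw [lintegral_eq_sum_of_sum_measure_singleton_eq_one hs, Finset.sum_pair (by omega), hlaw,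
      hlaw, hbirth, hhold]
    simp [mul_comm]
  · have hs : ∑ j ∈ {m + 1, m - 1, m}, ν.map X {j} = 1 := by
      rw [Finset.sum_insert (by simp; omega), Finset.sum_pair (by omega), hlaw, hlaw, hlaw,
        hbirth, hdeath hm, hhold, ← ENNReal.ofReal_add hq (by linarith),
        ← ENNReal.ofReal_add hp (by linarith)]
      simp
    rw [lintegral_eq_sum_of_sum_measure_singleton_eq_one hs, Finset.sum_insert (by simp; omega),
      Finset.sum_pair (by omega), hlaw, hlaw, hlaw, hbirth, hdeath hm, hhold]
    simp only [mul_comm, add_assoc]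

variable {Ω : Type*}

def cylinder (N : ℕ → Ω → ℕ) (t : ℕ) (path : ℕ → ℕ) : Set Ω :=
  {ω | ∀ s ≤ t, N s ω = path s}

theorem cylinder_eq_preimage (N : ℕ → Ω → ℕ) (t : ℕ) (path : ℕ → ℕ) :
    cylinder N t path = (fun ω (s : Fin (t + 1)) => N s ω) ⁻¹' {fun s : Fin (t + 1) => path s} := by
  ext ω
  simp only [cylinder, Set.mem_ofPred_eq, Set.mem_preimage, Set.mem_singleton_iff, funext_iff,
    Fin.forall_iff, Nat.lt_succ_iff]

structure IsBirthDeathChain [MeasurableSpace Ω] (μ : Measure Ω) (N : ℕ → Ω → ℕ) (p q : ℕ → ℝ) :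
    Prop where
  measurable : ∀ t, Measurable (N t)
  birth_nonneg : ∀ m, 0 ≤ p m
  death_nonneg : ∀ m, 0 ≤ q m
  birth_add_death_le_one : ∀ m, p m + q m ≤ 1
  birth_zero : p 0 = 0
  death_zero : q 0 = 0
  birth : ∀ t path, μ (cylinder N t path) ≠ 0 →
    μ[|cylinder N t path] {ω | N (t + 1) ω = path t + 1} = ENNReal.ofReal (p (path t))
  death : ∀ t path, 0 < path t → μ (cylinder N t path) ≠ 0 →
    μ[|cylinder N t path] {ω | N (t + 1) ω = path t - 1} = ENNReal.ofReal (q (path t))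
  hold : ∀ t path, μ (cylinder N t path) ≠ 0 →
    μ[|cylinder N t path] {ω | N (t + 1) ω = path t} =
      ENNReal.ofReal (1 - p (path t) - q (path t))

namespace IsBirthDeathChain

variable [MeasurableSpace Ω] {μ : Measure Ω} {N : ℕ → Ω → ℕ} {p q : ℕ → ℝ}

theorem measurable_trajectory (h : IsBirthDeathChain μ N p q) (t : ℕ) :
    Measurable fun ω (s : Fin (t + 1)) => N s ω :=
  measurable_pi_lambda _ fun s => h.measurable s

theorem measurableSet_cylinder (h : IsBirthDeathChain μ N p q) (t : ℕ) (path : ℕ → ℕ) :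
    MeasurableSet (cylinder N t path) := by
  rw [cylinder_eq_preimage]
  exact h.measurable_trajectory t (measurableSet_singleton _)

theorem setLIntegral_cylinder (h : IsBirthDeathChain μ N p q) (t : ℕ) (path : ℕ → ℕ)
    (f : ℕ → ℝ≥0∞) :
    ∫⁻ ω in cylinder N t path, f (N t ω) ∂μ = μ (cylinder N t path) * f (path t) := by
  rw [setLIntegral_congr_fun (h.measurableSet_cylinder t path)
    (fun ω hω => by rw [hω t le_rfl]), setLIntegral_const, mul_comm]

theorem setLIntegral_cylinder_succ [IsFiniteMeasure μ] (h : IsBirthDeathChain μ N p q)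
    (t : ℕ) (path : ℕ → ℕ) (f : ℕ → ℝ≥0∞) :
    ∫⁻ ω in cylinder N t path, f (N (t + 1) ω) ∂μ = μ (cylinder N t path) *
      (ENNReal.ofReal (p (path t)) * f (path t + 1) + ENNReal.ofReal (q (path t)) * f (path t - 1)
        + ENNReal.ofReal (1 - p (path t) - q (path t)) * f (path t)) := by
  rw [setLIntegral_eq_measure_mul_lintegral_cond (measure_ne_top μ _)]
  rcases eq_or_ne (μ (cylinder N t path)) 0 with h0 | h0
  · rw [h0, zero_mul, zero_mul]
  have := cond_isProbabilityMeasure (μ := μ) h0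
  rw [lintegral_comp_eq_of_birthDeathStep (h.measurable (t + 1)) (h.birth_nonneg _)
    (h.death_nonneg _) (h.birth_add_death_le_one _) (h.birth t path h0)
    (fun hpos => h.death t path hpos h0) (h.hold t path h0)
    (fun h0 => h0 ▸ h.death_zero)]

section Drift

variable {f : ℕ → ℝ≥0∞} {c : ℝ≥0∞}

theorem lintegral_succ_le [IsFiniteMeasure μ] (h : IsBirthDeathChain μ N p q) (hf0 : f 0 = 0)
    (hdrift : ∀ m, 0 < m → ENNReal.ofReal (p m) * f (m + 1) + ENNReal.ofReal (q m) * f (m - 1)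
      + ENNReal.ofReal (1 - p m - q m) * f m ≤ c * f m) (t : ℕ) :
    ∫⁻ ω, f (N (t + 1) ω) ∂μ ≤ c * ∫⁻ ω, f (N t ω) ∂μ := by
  rw [lintegral_eq_tsum_setLIntegral_preimage (h.measurable_trajectory t),
    lintegral_eq_tsum_setLIntegral_preimage (h.measurable_trajectory t), ← ENNReal.tsum_mul_left]
  refine ENNReal.tsum_le_tsum fun v => ?_
  obtain ⟨path, rfl⟩ : ∃ path : ℕ → ℕ, v = fun s : Fin (t + 1) => path s :=
    ⟨fun n => if hn : n < t + 1 then v ⟨n, hn⟩ else 0, funext fun s => by simp [s.isLt]⟩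
  rw [← cylinder_eq_preimage, h.setLIntegral_cylinder_succ, h.setLIntegral_cylinder,
    mul_left_comm]
  rcases Nat.eq_zero_or_pos (path t) with h0 | hpos
  · simp [h0, h.birth_zero, h.death_zero, hf0]
  · exact mul_le_mul_right (hdrift _ hpos) _

theorem lintegral_le_pow_mul [IsFiniteMeasure μ] (h : IsBirthDeathChain μ N p q) (hf0 : f 0 = 0)
    (hdrift : ∀ m, 0 < m → ENNReal.ofReal (p m) * f (m + 1) + ENNReal.ofReal (q m) * f (m - 1)
      + ENNReal.ofReal (1 - p m - q m) * f m ≤ c * f m) (t : ℕ) :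
    ∫⁻ ω, f (N t ω) ∂μ ≤ c ^ t * ∫⁻ ω, f (N 0 ω) ∂μ := by
  induction t with
  | zero => rw [pow_zero, one_mul]
  | succ t ih =>
    calc ∫⁻ ω, f (N (t + 1) ω) ∂μ ≤ c * ∫⁻ ω, f (N t ω) ∂μ := h.lintegral_succ_le hf0 hdrift t
      _ ≤ c ^ (t + 1) * ∫⁻ ω, f (N 0 ω) ∂μ := by
        rw [pow_succ', mul_assoc]; exact mul_le_mul_right ih c

theorem measure_ne_zero_mul_le [IsProbabilityMeasure μ] (h : IsBirthDeathChain μ N p q)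
    (hf : Monotone f) (hf0 : f 0 = 0)
    (hdrift : ∀ m, 0 < m → ENNReal.ofReal (p m) * f (m + 1) + ENNReal.ofReal (q m) * f (m - 1)
      + ENNReal.ofReal (1 - p m - q m) * f m ≤ c * f m) {n : ℕ} (hN0 : ∀ ω, N 0 ω = n) (t : ℕ) :
    μ {ω | N t ω ≠ 0} * f 1 ≤ c ^ t * f n := by
  have hsub : {ω | N t ω ≠ 0} ⊆ {ω | f 1 ≤ f (N t ω)} := fun ω hω =>
    hf (Nat.one_le_iff_ne_zero.mpr hω)
  calc μ {ω | N t ω ≠ 0} * f 1 ≤ f 1 * μ {ω | f 1 ≤ f (N t ω)} := by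
        rw [mul_comm]; exact mul_le_mul_right (measure_mono hsub) _
    _ ≤ ∫⁻ ω, f (N t ω) ∂μ :=
        mul_meas_ge_le_lintegral₀ ((measurable_of_countable f).comp (h.measurable t)).aemeasurable _
    _ ≤ c ^ t * ∫⁻ ω, f (N 0 ω) ∂μ := h.lintegral_le_pow_mul hf0 hdrift t
    _ = c ^ t * f n := by simp [hN0]

end Drift

theorem measure_ne_zero_le [IsProbabilityMeasure μ] (h : IsBirthDeathChain μ N p q)
    {φ : ℕ → ℝ} (hφ : Monotone φ) (hφ0 : φ 0 = 0) (hφ1 : 0 < φ 1) {c : ℝ} (hc : 0 ≤ c)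
    (hdrift : ∀ m, 0 < m →
      p m * φ (m + 1) + q m * φ (m - 1) + (1 - p m - q m) * φ m ≤ c * φ m)
    {n : ℕ} (hN0 : ∀ ω, N 0 ω = n) (t : ℕ) :
    μ {ω | N t ω ≠ 0} ≤ ENNReal.ofReal (c ^ t * φ n / φ 1) := by
  have hφ_nonneg : ∀ m, 0 ≤ φ m := fun m => hφ0 ▸ hφ (Nat.zero_le m)
  have key := h.measure_ne_zero_mul_le (f := fun m => ENNReal.ofReal (φ m)) (c := ENNReal.ofReal c)
    (fun a b hab => ENNReal.ofReal_le_ofReal (hφ hab)) (by simp [hφ0]) (fun m hm => by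
      have hhold : 0 ≤ 1 - p m - q m := by linarith [h.birth_add_death_le_one m]
      have h₁ := mul_nonneg (h.birth_nonneg m) (hφ_nonneg (m + 1))
      have h₂ := mul_nonneg (h.death_nonneg m) (hφ_nonneg (m - 1))
      have h₃ := mul_nonneg hhold (hφ_nonneg m)
      rw [← ENNReal.ofReal_mul (h.birth_nonneg m), ← ENNReal.ofReal_mul (h.death_nonneg m),
        ← ENNReal.ofReal_mul hhold, ← ENNReal.ofReal_mul hc, ← ENNReal.ofReal_add h₁ h₂,
        ← ENNReal.ofReal_add (add_nonneg h₁ h₂) h₃]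
      exact ENNReal.ofReal_le_ofReal (hdrift m hm)) hN0 t
  rw [ENNReal.ofReal_div_of_pos hφ1, ENNReal.ofReal_mul (by positivity), ENNReal.ofReal_pow hc]
  exact ENNReal.le_div_iff_mul_le (Or.inl (by simpa using hφ1)) (Or.inl ENNReal.ofReal_ne_top)
    |>.mpr key

end IsBirthDeathChain

section Potential

def increment (r : ℝ) (M m : ℕ) : ℝ := r ^ min m M * 2 ^ (m - M)

def potential (r : ℝ) (M m : ℕ) : ℝ := ∑ j ∈ Finset.range m, increment r M (j + 1)

variable {r : ℝ} {M m : ℕ}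

theorem increment_pos (hr : 0 < r) (m : ℕ) : 0 < increment r M m := by
  unfold increment; positivity

theorem increment_succ_of_lt (h : m < M) : increment r M (m + 1) = r * increment r M m := by
  simp only [increment, min_eq_left (Nat.succ_le_of_lt h), min_eq_left h.le,
    Nat.sub_eq_zero_of_le (Nat.succ_le_of_lt h), Nat.sub_eq_zero_of_le h.le, pow_succ]
  ring

theorem increment_succ_of_le (h : M ≤ m) : increment r M (m + 1) = 2 * increment r M m := by
  simp only [increment, min_eq_right h, min_eq_right (h.trans m.le_succ),
    Nat.sub_add_comm h, pow_succ]
  ring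

theorem pow_le_increment (hr0 : 0 ≤ r) (hr1 : r ≤ 1) (m : ℕ) : r ^ M ≤ increment r M m :=
  calc r ^ M ≤ r ^ min m M := pow_le_pow_of_le_one hr0 hr1 (min_le_right m M)
    _ ≤ increment r M m := le_mul_of_one_le_right (by positivity) (one_le_pow₀ one_le_two)

theorem increment_le_two_pow (hr0 : 0 ≤ r) (hr1 : r ≤ 1) (m : ℕ) : increment r M m ≤ 2 ^ m :=
  calc increment r M m ≤ 1 * 2 ^ (m - M) :=
        mul_le_mul_of_nonneg_right (pow_le_one₀ hr0 hr1) (by positivity)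
    _ ≤ 2 ^ m := by rw [one_mul]; exact pow_le_pow_right₀ one_le_two (Nat.sub_le m M)

@[simp]
theorem potential_zero : potential r M 0 = 0 := by simp [potential]

theorem potential_succ (m : ℕ) :
    potential r M (m + 1) = potential r M m + increment r M (m + 1) :=
  Finset.sum_range_succ _ _

theorem potential_one_pos (hr : 0 < r) : 0 < potential r M 1 := by
  rw [potential_succ, potential_zero, zero_add]; exact increment_pos hr 1

theorem monotone_potential (hr : 0 < r) : Monotone (potential r M) :=
  monotone_nat_of_le_succ fun m => by
    rw [potential_succ]; exact le_add_of_nonneg_right (increment_pos hr _).le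

theorem potential_le_two_mul_two_pow (hr0 : 0 ≤ r) (hr1 : r ≤ 1) (m : ℕ) :
    potential r M m ≤ 2 * 2 ^ m := by
  induction m with
  | zero => simp
  | succ m ih =>
    rw [potential_succ, pow_succ]
    linarith [increment_le_two_pow (M := M) hr0 hr1 (m + 1), pow_succ (2 : ℝ) m]

theorem potential_nonneg (hr : 0 < r) (m : ℕ) : 0 ≤ potential r M m := by
  simpa using monotone_potential (M := M) hr (Nat.zero_le m)

theorem increment_le_potential (hr : 0 < r) (hm : 0 < m) : increment r M m ≤ potential r M m := by
  obtain ⟨k, rfl⟩ := Nat.exists_eq_add_one_of_ne_zero hm.ne'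
  rw [potential_succ]
  exact le_add_of_nonneg_left (potential_nonneg hr k)

theorem pow_le_potential (hr0 : 0 < r) (hr1 : r ≤ 1) (hM : 0 < M) : r ^ M ≤ potential r M M :=
  (pow_le_increment hr0.le hr1 M).trans (increment_le_potential hr0 hM)

theorem potential_le_of_le (hr : 0 < r) (h : M ≤ m) :
    potential r M m ≤ potential r M M + 2 * increment r M m := by
  induction m, h using Nat.le_induction with
  | base => linarith [increment_pos (M := M) hr M]
  | succ m hm ih =>
    rw [potential_succ, increment_succ_of_le hm]
    linarith

theorem mul_increment_succ_add_mul_potential_le (hr0 : 0 < r) (hr1 : r ≤ 1) {p ε D : ℝ}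
    (hε : 0 ≤ ε) (hεD : ε ≤ D / 8) (hεM : ε * potential r M M ≤ D / 2 * r ^ M)
    (hsmall : m < M → p * r ≤ D / 2) (hlarge : M ≤ m → p ≤ D / 8) :
    p * increment r M (m + 1) + ε * potential r M m ≤ D * increment r M m := by
  have hrM := pow_le_increment (M := M) hr0.le hr1 m
  have hinc := increment_pos (M := M) hr0 m
  rcases lt_or_ge m M with h | h
  · have := mul_le_mul_of_nonneg_left (monotone_potential (M := M) hr0 h.le) hε
    rw [increment_succ_of_lt h]
    nlinarith [hsmall h]
  · have := mul_le_mul_of_nonneg_left (potential_le_of_le hr0 h) hε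
    rw [increment_succ_of_le h]
    nlinarith [hlarge h]

theorem potential_drift (hr : 0 < r) {p q ε D : ℝ} (hm : 0 < m) (hqD : D ≤ q)
    (hkey : p * increment r M (m + 1) + ε * potential r M m ≤ D * increment r M m) :
    p * potential r M (m + 1) + q * potential r M (m - 1) + (1 - p - q) * potential r M m
      ≤ (1 - ε) * potential r M m := by
  obtain ⟨k, rfl⟩ := Nat.exists_eq_add_one_of_ne_zero hm.ne'
  rw [potential_succ k] at hkey
  rw [Nat.add_sub_cancel, potential_succ (k + 1), potential_succ k]
  nlinarith [mul_le_mul_of_nonneg_right hqD (increment_pos (M := M) hr (k + 1)).le]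

theorem exists_potential_drift (C : ℝ) {D : ℝ} (hD : 0 < D) (hD1 : D < 1) :
    ∃ ε : ℝ, 0 < ε ∧ ε < 1 ∧ ∃ φ : ℕ → ℝ, Monotone φ ∧ φ 0 = 0 ∧ 0 < φ 1 ∧
      (∀ m, φ m ≤ 2 * 2 ^ m) ∧ ∀ m : ℕ, 0 < m → ∀ p q : ℝ, D ≤ q → p + q ≤ 1 →
        p ≤ C / m → p * φ (m + 1) + q * φ (m - 1) + (1 - p - q) * φ m ≤ (1 - ε) * φ m := by
  set r := min 1 (D / (2 * (1 - D)))
  obtain ⟨M, hM, hCM⟩ : ∃ M : ℕ, 0 < M ∧ 8 * C / D ≤ M :=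
    ⟨⌈8 * C / D⌉₊ + 1, Nat.succ_pos _, (Nat.le_ceil _).trans (by push_cast; linarith)⟩
  have hr0 : 0 < r := lt_min one_pos (div_pos hD (by linarith))
  have hr1 : r ≤ 1 := min_le_left _ _
  have hφM : r ^ M ≤ potential r M M := pow_le_potential hr0 hr1 hM
  have hφMpos : 0 < potential r M M := (pow_pos hr0 M).trans_le hφM
  set ε := D / 8 * r ^ M / potential r M M
  have hεM : ε * potential r M M = D / 8 * r ^ M := div_mul_cancel₀ _ hφMpos.ne'
  have hεD : ε ≤ D / 8 := div_le_of_le_mul₀ hφMpos.le (by positivity) (by gcongr)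
  refine ⟨ε, by positivity, by linarith, potential r M, monotone_potential hr0, potential_zero,
    potential_one_pos hr0, potential_le_two_mul_two_pow hr0.le hr1,
    fun m hm p q hqD hpq hpC => potential_drift hr0 hm hqD
      (mul_increment_succ_add_mul_potential_le hr0 hr1 (by positivity) hεD
        (by rw [hεM]; nlinarith [pow_pos hr0 M]) (fun _ => ?_) (fun hMm => ?_))⟩
  · calc p * r ≤ (1 - D) * (D / (2 * (1 - D))) :=
          mul_le_mul (by linarith) (min_le_right _ _) hr0.le (by linarith)
      _ = D / 2 := by field_simp [(by linarith : 1 - D ≠ 0)]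
  · have hm' : 8 * C / D ≤ m := hCM.trans (by exact_mod_cast hMm)
    rw [div_le_iff₀ hD] at hm'
    calc p ≤ C / m := hpC
      _ ≤ D / 8 := by rw [div_le_iff₀ (by exact_mod_cast hm)]; linarith

end Potential

open Filter in
theorem exists_pow_mul_pow_le_div_rpow {a B c : ℝ} (ha0 : 0 ≤ a) (ha1 : a < 1) (hB : 0 < B)
    (hc : 0 < c) (k : ℝ) :
    ∃ t₀ n₀ : ℕ, ∀ n ≥ n₀, a ^ (t₀ * n) * B ^ n ≤ c / (n : ℝ) ^ k := by
  obtain ⟨t₀, ht₀⟩ := exists_pow_lt_of_lt_one (inv_pos.mpr hB) ha1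
  have hb0 : 0 ≤ a ^ t₀ * B := by positivity
  have hb1 : a ^ t₀ * B < 1 :=
    calc a ^ t₀ * B < B⁻¹ * B := by gcongr
      _ = 1 := inv_mul_cancel₀ hB.ne'
  have hlim := tendsto_pow_const_mul_const_pow_of_abs_lt_one ⌈k⌉₊ (abs_lt.mpr ⟨by linarith, hb1⟩)
  obtain ⟨n₀, hn₀⟩ :=
    eventually_atTop.mp ((hlim.eventually (gt_mem_nhds hc)).and (eventually_ge_atTop 1))
  refine ⟨t₀, n₀, fun n hn => ?_⟩
  obtain ⟨hlt, hn1⟩ := hn₀ n hn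
  have hn1' : (1 : ℝ) ≤ n := by exact_mod_cast hn1
  rw [pow_mul, ← mul_pow, le_div_iff₀ (by positivity)]
  calc (a ^ t₀ * B) ^ n * (n : ℝ) ^ k ≤ (a ^ t₀ * B) ^ n * (n : ℝ) ^ ⌈k⌉₊ := by
        rw [← Real.rpow_natCast (n : ℝ)]
        gcongr
        exact Nat.le_ceil k
    _ ≤ c := by rw [mul_comm]; exact hlt.le

end BirthDeath

open BirthDeath in
theorem stmt_9_general (C D : ℝ) (hD : 0 < D) (hD1 : D < 1) (k : ℝ) :
    ∃ θ : ℝ, 0 < θ ∧ ∃ n₀ : ℕ, ∀ n : ℕ, n₀ ≤ n →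
      ∀ (Ω : Type) (_ : MeasurableSpace Ω) (μ : Measure Ω), IsProbabilityMeasure μ →
      ∀ (N : ℕ → Ω → ℕ) (p q : ℕ → ℝ),
        (∀ t, Measurable (N t)) →
        (∀ m, 0 ≤ p m) → (∀ m, 0 ≤ q m) → (∀ m, p m + q m ≤ 1) →
        p 0 = 0 → q 0 = 0 →
        (∀ m : ℕ, 0 < m → p m ≤ C / m) →
        (∀ m : ℕ, 0 < m → D ≤ q m) →
        (∀ ω, N 0 ω = n) →
        -- birth transitions, conditionally on any past trajectory
        (∀ (t : ℕ) (path : ℕ → ℕ),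
          μ {ω | ∀ s ≤ t, N s ω = path s} ≠ 0 →
          μ[|{ω | ∀ s ≤ t, N s ω = path s}] {ω | N (t + 1) ω = path t + 1}
            = ENNReal.ofReal (p (path t))) →
        -- death transitions
        (∀ (t : ℕ) (path : ℕ → ℕ), 0 < path t →
          μ {ω | ∀ s ≤ t, N s ω = path s} ≠ 0 →
          μ[|{ω | ∀ s ≤ t, N s ω = path s}] {ω | N (t + 1) ω = path t - 1}
            = ENNReal.ofReal (q (path t))) →
        -- holding steps
        (∀ (t : ℕ) (path : ℕ → ℕ),
          μ {ω | ∀ s ≤ t, N s ω = path s} ≠ 0 →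
          μ[|{ω | ∀ s ≤ t, N s ω = path s}] {ω | N (t + 1) ω = path t}
            = ENNReal.ofReal (1 - p (path t) - q (path t))) →
        μ {ω | ENNReal.ofReal (θ * n) ≤ extinctionTime N ω} ≤
          ENNReal.ofReal (1 / (n : ℝ) ^ k) := by
  obtain ⟨ε, hε0, hε1, φ, hφ, hφ0, hφ1, hφ_le, hφ_drift⟩ := exists_potential_drift C hD hD1
  obtain ⟨t₀, n₀, hdecay⟩ := exists_pow_mul_pow_le_div_rpow (a := 1 - ε) (by linarith)
    (by linarith) two_pos (half_pos hφ1) k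
  refine ⟨t₀ + 1, by positivity, max n₀ 1, fun n hn Ω _ μ _ N p q hN hp hq hpq hp0 hq0 hpC hqD hN0
    hbirth hdeath hhold => ?_⟩
  have hchain : IsBirthDeathChain μ N p q := ⟨hN, hp, hq, hpq, hp0, hq0, hbirth, hdeath, hhold⟩
  have hn1 : (1 : ℝ) ≤ n := by exact_mod_cast (le_max_right n₀ 1).trans hn
  have hsurvive : {ω | ENNReal.ofReal ((t₀ + 1) * n) ≤ extinctionTime N ω} ⊆
      {ω | N (t₀ * n) ω ≠ 0} := fun ω hω h0 => by
    have := hω.trans (extinctionTime_le_of_eq_zero h0)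
    rw [← ENNReal.ofReal_natCast, ENNReal.ofReal_le_ofReal_iff (by positivity)] at this
    push_cast at this
    nlinarith
  calc μ {ω | ENNReal.ofReal ((t₀ + 1) * n) ≤ extinctionTime N ω}
      ≤ μ {ω | N (t₀ * n) ω ≠ 0} := measure_mono hsurvive
    _ ≤ ENNReal.ofReal ((1 - ε) ^ (t₀ * n) * φ n / φ 1) :=
        hchain.measure_ne_zero_le hφ hφ0 hφ1 (by linarith)
          (fun m hm => hφ_drift m hm (p m) (q m) (hqD m hm) (hpq m) (hpC m hm)) hN0 _
    _ ≤ ENNReal.ofReal (1 / (n : ℝ) ^ k) := by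
        refine ENNReal.ofReal_le_ofReal ((div_le_iff₀ hφ1).mpr ?_)
        calc (1 - ε) ^ (t₀ * n) * φ n ≤ 2 * ((1 - ε) ^ (t₀ * n) * 2 ^ n) := by
              nlinarith [hφ_le n, pow_nonneg (by linarith : (0 : ℝ) ≤ 1 - ε) (t₀ * n)]
          _ ≤ 2 * (φ 1 / 2 / (n : ℝ) ^ k) := by gcongr; exact hdecay n (le_of_max_le_left hn)
          _ = 1 / (n : ℝ) ^ k * φ 1 := by ring

/-- High-probability bound on the extinction time of a nice birth-death chain:
for every `k > 0` there is a constant `θ(k)` such that, for all sufficiently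
large `n`, `Pr[E(n) ≥ θ(k)·n] ≤ 1/n^k`. -/
theorem stmt_9 (C D : ℝ) (hC : 0 < C) (hD : 0 < D) (hD1 : D < 1) (k : ℝ) (hk : 0 < k) :
    ∃ θ : ℝ, 0 < θ ∧ ∃ n₀ : ℕ, ∀ n : ℕ, n₀ ≤ n →
      ∀ (Ω : Type) (_ : MeasurableSpace Ω) (μ : Measure Ω), IsProbabilityMeasure μ →
      ∀ (N : ℕ → Ω → ℕ) (p q : ℕ → ℝ),
        (∀ t, Measurable (N t)) →
        (∀ m, 0 ≤ p m) → (∀ m, 0 ≤ q m) → (∀ m, p m + q m ≤ 1) →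
        p 0 = 0 → q 0 = 0 →
        (∀ m : ℕ, 0 < m → p m ≤ C / m) →
        (∀ m : ℕ, 0 < m → D ≤ q m) →
        (∀ ω, N 0 ω = n) →
        -- birth transitions, conditionally on any past trajectory
        (∀ (t : ℕ) (path : ℕ → ℕ),
          μ {ω | ∀ s ≤ t, N s ω = path s} ≠ 0 →
          μ[|{ω | ∀ s ≤ t, N s ω = path s}] {ω | N (t + 1) ω = path t + 1}
            = ENNReal.ofReal (p (path t))) →
        -- death transitions
        (∀ (t : ℕ) (path : ℕ → ℕ), 0 < path t →
          μ {ω | ∀ s ≤ t, N s ω = path s} ≠ 0 →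
          μ[|{ω | ∀ s ≤ t, N s ω = path s}] {ω | N (t + 1) ω = path t - 1}
            = ENNReal.ofReal (q (path t))) →
        -- holding steps
        (∀ (t : ℕ) (path : ℕ → ℕ),
          μ {ω | ∀ s ≤ t, N s ω = path s} ≠ 0 →
          μ[|{ω | ∀ s ≤ t, N s ω = path s}] {ω | N (t + 1) ω = path t}
            = ENNReal.ofReal (1 - p (path t) - q (path t))) →
        μ {ω | ENNReal.ofReal (θ * n) ≤ extinctionTime N ω} ≤
          ENNReal.ofReal (1 / (n : ℝ) ^ k) :=
  stmt_9_general C D hD hD1 k
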